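/- For every α ∈ (0, 1/2] there exists a constant C > 0 such that for every α-weight-balanced binary search tree S with n ≥ 1 nodes, writing Preorder(S) = (x_1,...,x_n), it holds that Σ_{i=2}^{n} log₂(|r(x_i) − r(x_{i−1})| + 1) ≤ C·n, where r(x) is the rank of x among the keys of S (the number of keys of S that are ≤ x). -/

import Mathlib

/-- Binary trees with keys at internal nodes. -/
inductive BT (α : Type) where
  | leaf : BT α
  | node : BT α → α → BT α → BT α
deriving DecidableEq

namespace BT

variable {α : Type} [LinearOrder α]

/-- The list of keys of a tree, in symmetric (inorder) order. -/
def keys : BT α → List α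
  | leaf => []
  | node l v r => keys l ++ v :: keys r

/-- The number of nodes of a tree. -/
def size : BT α → ℕ
  | leaf => 0
  | node l _ r => size l + size r + 1

/-- The symmetric-order (binary search tree) property. -/
def IsBST : BT α → Prop
  | leaf => True
  | node l v r => (∀ x ∈ l.keys, x < v) ∧ (∀ x ∈ r.keys, v < x) ∧ l.IsBST ∧ r.IsBST

/-- Preorder of a binary tree: root, then left subtree, then right subtree. -/
def preorder : BT α → List α
  | leaf => []
  | node l v r => v :: (preorder l ++ preorder r)

/-- Postorder of a binary tree: left subtree, right subtree, then root. -/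
def postorder : BT α → List α
  | leaf => []
  | node l v r => postorder l ++ postorder r ++ [v]

/-- Reversed preorder: root, then right subtree, then left subtree
(the preorder of the mirror image). -/
def revPreorder : BT α → List α
  | leaf => []
  | node l v r => v :: (revPreorder r ++ revPreorder l)

/-- Standard leaf insertion into a binary search tree. -/
def insertKey : BT α → α → BT α
  | leaf, x => node leaf x leaf
  | node l v r, x =>
    if x < v then node (insertKey l x) v r
    else if v < x then node l v (insertKey r x)
    else node l v r

/-- The depth (number of edges from the root) of the node with key `x`,
located by binary search. -/
def depthOf : BT α → α → ℕ
  | leaf, _ => 0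
  | node l v r, x =>
    if x < v then depthOf l x + 1
    else if v < x then depthOf r x + 1
    else 0

/-- The search path to the key `x`: `false` records a step to a left child,
`true` a step to a right child. -/
def pathTo : BT α → α → List Bool
  | leaf, _ => []
  | node l v r, x =>
    if x < v then false :: pathTo l x
    else if v < x then true :: pathTo r x
    else []

/-- The left-depth of the node with key `x`: the number of left-child edges
on the path from the root to it. -/
def leftDepthKey : BT α → α → ℕ
  | leaf, _ => 0
  | node l v r, x =>
    if x < v then leftDepthKey l x + 1
    else if v < x then leftDepthKey r x
    else 0

/-- The subtree rooted at the node with key `x` (empty if `x` is absent). -/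
def subtreeAt : BT α → α → BT α
  | leaf, _ => leaf
  | node l v r, x =>
    if x < v then subtreeAt l x
    else if v < x then subtreeAt r x
    else node l v r

/-- The key at the root, if any. -/
def rootKey : BT α → Option α
  | leaf => none
  | node _ v _ => some v

/-- The key of the parent of the node with key `x`, if any. -/
def parentKey : BT α → α → Option α
  | leaf, _ => none
  | node l v r, x =>
    if x < v then (if l.rootKey = some x then some v else l.parentKey x)
    else if v < x then (if r.rootKey = some x then some v else r.parentKey x)
    else none

/-- A step of the context (zipper) describing the search path from the root
to the current subtree: `inL v r` means the current subtree is the left child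
of a node with key `v` and right subtree `r`; `inR l v` means it is the right
child of a node with key `v` and left subtree `l`. -/
inductive Ctx (α : Type) where
  | inL : α → BT α → Ctx α
  | inR : BT α → α → Ctx α

/-- Descend along the search path for `x`, recording the context.
The head of the returned list corresponds to the immediate parent. -/
def descend : BT α → α → List (Ctx α) → List (Ctx α) × BT α
  | leaf, _, acc => (acc, leaf)
  | node l v r, x, acc =>
    if x < v then descend l x (Ctx.inL v r :: acc)
    else if v < x then descend r x (Ctx.inR l v :: acc)
    else (acc, node l v r)

/-- Reattach a subtree into its context, with no rotations. -/
def rebuild : BT α → List (Ctx α) → BT α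
  | t, [] => t
  | t, Ctx.inL v r :: cs => rebuild (node t v r) cs
  | t, Ctx.inR l v :: cs => rebuild (node l v t) cs

/-- Bottom-up splay steps: repeatedly apply zig / zig-zig / zig-zag steps to
the current subtree (rooted at the node being splayed) until the context is
exhausted. -/
def splayLoop : BT α → List (Ctx α) → BT α
  | t, [] => t
  | node a x b, [Ctx.inL v r] => node a x (node b v r)          -- zig
  | node a x b, [Ctx.inR l v] => node (node l v a) x b          -- zig
  | node a x b, Ctx.inL p pr :: Ctx.inL g gr :: cs =>           -- zig-zig
      splayLoop (node a x (node b p (node pr g gr))) cs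
  | node a x b, Ctx.inL p pr :: Ctx.inR gl g :: cs =>           -- zig-zag
      splayLoop (node (node gl g a) x (node b p pr)) cs
  | node a x b, Ctx.inR pl p :: Ctx.inR gl g :: cs =>           -- zig-zig
      splayLoop (node (node (node gl g pl) p a) x b) cs
  | node a x b, Ctx.inR pl p :: Ctx.inL g gr :: cs =>           -- zig-zag
      splayLoop (node (node pl p a) x (node b g gr)) cs
  | leaf, cs => rebuild leaf cs   -- unreachable when the splayed key is present

/-- Splaying the key `x`: if `x` occurs in the tree, bring its node to the
root by bottom-up splay steps; otherwise leave the tree unchanged. -/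
def splay (x : α) (t : BT α) : BT α :=
  match descend t x [] with
  | (_, leaf) => t
  | (cs, found) => splayLoop found cs

/-- `α`-weight-balance in the sense of Nievergelt–Reingold:
at each node, `min(|L|,|R|) + 1 ≥ α * (|x| + 1)`. -/
def WeightBalanced (a : ℝ) : BT α → Prop
  | leaf => True
  | node l _ r =>
      (min l.size r.size + 1 : ℝ) ≥ a * ((l.size + r.size + 1 : ℕ) + 1 : ℝ) ∧
      WeightBalanced a l ∧ WeightBalanced a r

/-- The rank of `x` in `t`: the number of keys of `t` that are `≤ x`. -/
def rank (t : BT α) (x : α) : ℕ := (t.keys.filter (fun y => y ≤ x)).length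

end BT

section Defs

variable {α : Type} [LinearOrder α]

/-- The insertion tree of a sequence: leaf-insert the keys in order. -/
def bstOf (π : List α) : BT α := π.foldl BT.insertKey BT.leaf

/-- `q` is a sub-root: a node of `t` not yet touched whose parent is touched,
where `touched` is the list of touched keys. -/
def IsSubRoot (t : BT α) (touched : List α) (q : α) : Prop :=
  q ∈ t.keys ∧ q ∉ touched ∧ ∃ p, t.parentKey q = some p ∧ p ∈ touched

/-- π avoids the pattern (2,3,1). -/
def Avoids231 (π : List α) : Prop :=
  ¬ ∃ i j k : Fin π.length, i < j ∧ j < k ∧ π.get k < π.get i ∧ π.get i < π.get j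

/-- π avoids the pattern (3,1,2). -/
def Avoids312 (π : List α) : Prop :=
  ¬ ∃ i j k : Fin π.length, i < j ∧ j < k ∧ π.get j < π.get k ∧ π.get k < π.get i

/-- π avoids the pattern (2,1,3). -/
def Avoids213 (π : List α) : Prop :=
  ¬ ∃ i j k : Fin π.length, i < j ∧ j < k ∧ π.get j < π.get i ∧ π.get i < π.get k

/-- π contains a strictly decreasing subsequence of length `k`. -/
def HasDecreasingSubseq (π : List α) (k : ℕ) : Prop :=
  ∃ s : List α, s.Sublist π ∧ s.length = k ∧ s.Chain' (· > ·)

/-- Splay the keys of a list in order, starting from `t`. -/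
def splaySeq (π : List α) (t : BT α) : BT α := π.foldl (fun s x => BT.splay x s) t

/-- The cost of splaying a sequence of keys starting from `t`:
each splay costs the current depth of the requested key plus one. -/
def splayCost : BT α → List α → ℕ
  | _, [] => 0
  | t, x :: xs => (t.depthOf x + 1) + splayCost (BT.splay x t) xs

/-- The cost of insertion splaying a sequence of keys starting from `t`:
each key is leaf-inserted, then the new node is splayed, at a cost of
its depth after insertion plus one. -/
def insertSplayCost : BT α → List α → ℕ
  | _, [] => 0
  | t, x :: xs =>
    ((t.insertKey x).depthOf x + 1) + insertSplayCost (BT.splay x (t.insertKey x)) xs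

/-- `DF rk xs` = Σ_{i≥2} log₂(|rk(x_i) − rk(x_{i−1})| + 1). -/
noncomputable def DF (rk : α → ℕ) (xs : List α) : ℝ :=
  ((xs.zip xs.tail).map
    (fun p => Real.logb 2 (|(rk p.2 : ℝ) - (rk p.1 : ℝ)| + 1))).sum

/-- The rank of `x` within the sequence `σ` itself. -/
def rankIn (σ : List α) (x : α) : ℕ := (σ.filter (fun y => y ≤ x)).length

/-- The dynamic-finger sum of a sequence, with ranks computed in the
sequence itself. -/
noncomputable def DFseq (σ : List α) : ℝ := DF (rankIn σ) σ

end Defs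

/-! Splitting the preorder at the root, `Preorder(S) = v :: (Preorder(L) ++ Preorder(R))`, and
noting that ranks in `S` restricted to a subtree are ranks in that subtree shifted by a constant,
gives `DF(S) ≤ DF(L) + DF(R) + 2 log₂(n + 1)`: only the two transitions out of `v` and from `L`
to `R` are new, and each costs at most `log₂(n + 1)`. Weight balance gives
`log₂(|L| + 1), log₂(|R| + 1) ≥ log₂(n + 1) - log₂(1/α)`, so the two subtracted logarithms in
the invariant `DF(S) ≤ 4 log₂(1/α) n - 2 log₂(n + 1)` pay for the new transitions. -/

section DynamicFinger

open Real

variable {α : Type}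

@[simp]
lemma DF_nil (rk : α → ℕ) : DF rk [] = 0 := by simp [DF]

@[simp]
lemma DF_singleton (rk : α → ℕ) (x : α) : DF rk [x] = 0 := by simp [DF]

lemma DF_cons_cons (rk : α → ℕ) (x y : α) (t : List α) :
    DF rk (x :: y :: t) = logb 2 (|(rk y : ℝ) - rk x| + 1) + DF rk (y :: t) := by
  simp [DF]

lemma DF_cons_le {rk : α → ℕ} {M : ℝ} (hM0 : 0 ≤ M)
    (hM : ∀ p q : α, logb 2 (|(rk q : ℝ) - rk p| + 1) ≤ M) (x : α) (t : List α) :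
    DF rk (x :: t) ≤ M + DF rk t := by
  cases t with
  | nil => simpa using hM0
  | cons y u => rw [DF_cons_cons]; linarith [hM x y]

lemma DF_append_le {rk : α → ℕ} {M : ℝ} (hM0 : 0 ≤ M)
    (hM : ∀ p q : α, logb 2 (|(rk q : ℝ) - rk p| + 1) ≤ M) (s t : List α) :
    DF rk (s ++ t) ≤ DF rk s + DF rk t + M := by
  induction s with
  | nil => simpa using hM0
  | cons x s ih =>
    cases s with
    | nil => simpa [add_comm] using DF_cons_le hM0 hM x t
    | cons y u =>
      rw [List.cons_append, List.cons_append, DF_cons_cons, DF_cons_cons, ← List.cons_append]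
      linarith

lemma DF_congr_add_const {rk rk' : α → ℕ} {c : ℝ} {xs : List α}
    (h : ∀ x ∈ xs, (rk x : ℝ) = rk' x + c) : DF rk xs = DF rk' xs := by
  unfold DF
  congr 1
  refine List.map_congr_left fun p hp => ?_
  obtain ⟨h₁, h₂⟩ := List.of_mem_zip hp
  rw [h _ h₁, h _ (List.mem_of_mem_tail h₂), add_sub_add_right_eq_sub]

end DynamicFinger

namespace BT

open Real

variable {α : Type}

lemma length_keys (t : BT α) : t.keys.length = t.size := by
  induction t with
  | leaf => rfl
  | node l v r ihl ihr => simp [keys, size, ihl, ihr]; omega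

lemma mem_keys_of_mem_preorder {t : BT α} {x : α} (h : x ∈ t.preorder) : x ∈ t.keys := by
  induction t with
  | leaf => simp [preorder] at h
  | node l v r ihl ihr =>
    simp only [preorder, List.mem_cons, List.mem_append] at h
    simp only [keys, List.mem_append, List.mem_cons]
    rcases h with h | h | h
    · exact Or.inr (Or.inl h)
    · exact Or.inl (ihl h)
    · exact Or.inr (Or.inr (ihr h))

lemma WeightBalanced.mul_size_add_one_le {a : ℝ} {l r : BT α} {v : α}
    (hwb : (node l v r).WeightBalanced a) :
    a * ((node l v r).size + 1) ≤ l.size + 1 ∧ a * ((node l v r).size + 1) ≤ r.size + 1 := by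
  have hbal := hwb.1
  push_cast at hbal
  simp only [size]
  push_cast
  constructor <;> linarith [min_le_left (l.size : ℝ) r.size, min_le_right (l.size : ℝ) r.size]

variable [LinearOrder α]

lemma rank_le_size (t : BT α) (x : α) : t.rank x ≤ t.size :=
  length_keys t ▸ List.length_filter_le _ _

lemma rank_node (l r : BT α) (v x : α) :
    (node l v r).rank x = l.rank x + (if v ≤ x then 1 else 0) + r.rank x := by
  by_cases h : v ≤ x <;> simp [rank, keys, List.filter_append, h]; omega

lemma rank_node_of_mem_left {l r : BT α} {v x : α} (hbst : (node l v r).IsBST)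
    (hx : x ∈ l.keys) : (node l v r).rank x = l.rank x := by
  obtain ⟨hl, hr, -, -⟩ := hbst
  have hxv : x < v := hl x hx
  have hr0 : r.rank x = 0 := by
    simpa [rank, List.filter_eq_nil_iff] using fun y hy => hxv.trans (hr y hy)
  rw [rank_node, hr0, if_neg hxv.not_ge]
  rfl

lemma rank_node_of_mem_right {l r : BT α} {v x : α} (hbst : (node l v r).IsBST)
    (hx : x ∈ r.keys) : (node l v r).rank x = l.size + 1 + r.rank x := by
  obtain ⟨hl, hr, -, -⟩ := hbst
  have hvx : v < x := hr x hx
  have hl_all : l.rank x = l.size := by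
    rw [rank, ← length_keys, List.filter_eq_self.mpr]
    simpa using fun y hy => ((hl y hy).trans hvx).le
  rw [rank_node, hl_all, if_pos hvx.le]

lemma logb_rank_sub_le (t : BT α) (p q : α) :
    logb 2 (|(t.rank q : ℝ) - t.rank p| + 1) ≤ logb 2 ((t.size : ℝ) + 1) := by
  have hdist : |(t.rank q : ℝ) - t.rank p| ≤ t.size :=
    abs_sub_le_of_nonneg_of_le (Nat.cast_nonneg _) (mod_cast rank_le_size t q)
      (Nat.cast_nonneg _) (mod_cast rank_le_size t p)
  exact logb_le_logb_of_le one_lt_two (by positivity) (by linarith)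

lemma DF_rank_node_preorder_le {l r : BT α} {v : α} (hbst : (node l v r).IsBST) :
    DF (node l v r).rank (node l v r).preorder
      ≤ DF l.rank l.preorder + DF r.rank r.preorder
        + 2 * logb 2 (((node l v r).size : ℝ) + 1) := by
  have hM0 : 0 ≤ logb 2 (((node l v r).size : ℝ) + 1) :=
    logb_nonneg one_lt_two (by simp)
  have hM := logb_rank_sub_le (node l v r)
  have hl : DF (node l v r).rank l.preorder = DF l.rank l.preorder :=
    DF_congr_add_const (c := 0) fun x hx => by
      simp [rank_node_of_mem_left hbst (mem_keys_of_mem_preorder hx)]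
  have hr : DF (node l v r).rank r.preorder = DF r.rank r.preorder :=
    DF_congr_add_const (c := l.size + 1) fun x hx => by
      rw [rank_node_of_mem_right hbst (mem_keys_of_mem_preorder hx)]; push_cast; ring
  have := DF_cons_le hM0 hM v (l.preorder ++ r.preorder)
  have := DF_append_le hM0 hM l.preorder r.preorder
  simp only [preorder]
  linarith

theorem DF_rank_preorder_le {a : ℝ} (ha0 : 0 < a) {T : BT α} (hbst : T.IsBST)
    (hwb : T.WeightBalanced a) :
    DF T.rank T.preorder ≤ 4 * logb 2 a⁻¹ * T.size - 2 * logb 2 ((T.size : ℝ) + 1) := by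
  induction T with
  | leaf => simp [preorder, size]
  | node l v r ihl ihr =>
    have hsplit := DF_rank_node_preorder_le hbst
    have ihl := ihl hbst.2.2.1 hwb.2.1
    have ihr := ihr hbst.2.2.2 hwb.2.2
    have hlog_ge {m : ℝ} (hm : a * ((node l v r).size + 1) ≤ m) :
        logb 2 a + logb 2 (((node l v r).size : ℝ) + 1) ≤ logb 2 m := by
      rw [← logb_mul ha0.ne' (by positivity)]
      exact logb_le_logb_of_le one_lt_two (by positivity) hm
    have hlogl := hlog_ge hwb.mul_size_add_one_le.1
    have hlogr := hlog_ge hwb.mul_size_add_one_le.2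
    have hsize : ((node l v r).size : ℝ) = l.size + r.size + 1 := by simp [size]
    rw [logb_inv] at ihl ihr ⊢
    rw [hsize] at hsplit hlogl hlogr ⊢
    linarith

end BT

theorem df_preorder_balanced_general {a : ℝ} (ha0 : 0 < a) :
    ∃ C : ℝ, 0 < C ∧
      ∀ (β : Type) (_ : LinearOrder β) (S : BT β), S.IsBST →
        BT.WeightBalanced a S → 1 ≤ S.size →
        DF (S.rank) S.preorder ≤ C * S.size := by
  refine ⟨max 1 (4 * Real.logb 2 a⁻¹), lt_max_of_lt_left one_pos, ?_⟩
  intro β _ S hbst hwb _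
  have hDF := BT.DF_rank_preorder_le ha0 hbst hwb
  have hlog : 0 ≤ Real.logb 2 ((S.size : ℝ) + 1) := Real.logb_nonneg one_lt_two (by simp)
  have hC : 4 * Real.logb 2 a⁻¹ * S.size ≤ max 1 (4 * Real.logb 2 a⁻¹) * S.size :=
    mul_le_mul_of_nonneg_right (le_max_right _ _) (Nat.cast_nonneg _)
  linarith

/-- For every α ∈ (0,1/2] there is a constant `C > 0` such that for every
α-weight-balanced binary search tree `S` with at least one node, the
dynamic-finger sum of `Preorder(S)` (with ranks in `S`) is at most `C·|S|`. -/
theorem df_preorder_balanced {a : ℝ} (ha0 : 0 < a) (ha : a ≤ 1 / 2) :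
    ∃ C : ℝ, 0 < C ∧
      ∀ (β : Type) (_ : LinearOrder β) (S : BT β), S.IsBST →
        BT.WeightBalanced a S → 1 ≤ S.size →
        DF (S.rank) S.preorder ≤ C * S.size :=
  df_preorder_balanced_general ha0
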